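/- arXiv:1504.00648 — 5 statements merged into one kernel-verified Lean document; each statement's English description precedes it below -/
import Mathlib

section
/- Let h : ℝᵐ → ℝ be convex and globally Lipschitz with constant L, and F : ℝⁿ → ℝᵐ continuously differentiable. Define φ(y,x) = h(F(x) + F'(x)(y − x)). Then for any sequences x_k → x and y_k → x there exist ε_k → 0⁺ such that h(F(y_k)) ≤ φ(y_k, x_k) + ε_k‖y_k − x_k‖; i.e., φ is a strict first-order model of f = h ∘ F in the sense of axiom (M̃₂). -/
/-!
Strict differentiability of `F` at `x` and continuity of `F'` at `x` make the linearization error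
`‖F y - F x' - F'(x') (y - x')‖` little-o of `‖y - x'‖` as `(y, x') → (x, x)`. Since `h` is
`L`-Lipschitz, `h (F y)` exceeds `h (F x' + F'(x') (y - x'))` by at most `L` times that error,
so `ε_k` is `L` times the ratio of the error to `‖y_k - x_k‖` along the two sequences.
-/

open Filter Asymptotics Topology

section

variable {𝕜 E F : Type*} [NontriviallyNormedField 𝕜] [NormedAddCommGroup E] [NormedSpace 𝕜 E]
  [NormedAddCommGroup F] [NormedSpace 𝕜 F]

theorem Asymptotics.isLittleO_apply_of_tendsto_zero {α : Type*} {l : Filter α}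
    {A : α → E →L[𝕜] F} {v : α → E} (hA : Tendsto A l (𝓝 0)) :
    (fun a => A a (v a)) =o[l] v := by
  refine isLittleO_iff.2 fun c hc => ?_
  filter_upwards [hA.eventually (Metric.closedBall_mem_nhds 0 hc)] with a ha
  rw [dist_zero_right] at ha
  calc ‖A a (v a)‖ ≤ ‖A a‖ * ‖v a‖ := (A a).le_opNorm _
    _ ≤ c * ‖v a‖ := by gcongr

theorem Asymptotics.IsLittleO.exists_tendsto_zero_norm_le {α : Type*} {l : Filter α}
    {f : α → E} {g : α → F} (hfg : f =o[l] g) (hzero : ∀ a, g a = 0 → f a = 0) :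
    ∃ ε : α → ℝ, Tendsto ε l (𝓝 0) ∧ (∀ a, 0 ≤ ε a) ∧ ∀ a, ‖f a‖ ≤ ε a * ‖g a‖ := by
  refine ⟨fun a => ‖f a‖ / ‖g a‖, ?_, fun a => by positivity, fun a => ?_⟩
  · refine (isLittleO_iff_tendsto' (.of_forall fun a ha => ?_)).1 hfg.norm_norm
    exact norm_eq_zero.2 (hzero a (norm_eq_zero.1 ha))
  · by_cases hg : g a = 0
    · simp [hzero a hg]
    · rw [div_mul_cancel₀ _ (norm_ne_zero_iff.2 hg)]

end

theorem ContDiffAt.isLittleO_sub_fderiv {𝕜 E F : Type*} [RCLike 𝕜] [NormedAddCommGroup E]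
    [NormedSpace 𝕜 E] [NormedAddCommGroup F] [NormedSpace 𝕜 F] {f : E → F} {x : E}
    (hf : ContDiffAt 𝕜 1 f x) :
    (fun p : E × E => f p.1 - f p.2 - fderiv 𝕜 f p.2 (p.1 - p.2)) =o[𝓝 (x, x)]
      fun p => p.1 - p.2 := by
  have hstrict := (hf.hasStrictFDerivAt one_ne_zero).isLittleO
  have hfderiv : Tendsto (fun p : E × E => fderiv 𝕜 f x - fderiv 𝕜 f p.2) (𝓝 (x, x)) (𝓝 0) := by
    simpa using (tendsto_const_nhds (x := fderiv 𝕜 f x)).sub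
      ((hf.continuousAt_fderiv one_ne_zero).tendsto.comp (continuous_snd.tendsto (x, x)))
  refine (hstrict.add (isLittleO_apply_of_tendsto_zero hfderiv)).congr_left fun p => ?_
  rw [sub_apply]
  abel

theorem natural_model_strict_general {n m : ℕ}
    (h : EuclideanSpace ℝ (Fin m) → ℝ) (L : NNReal)
    (hlip : LipschitzWith L h)
    (F : EuclideanSpace ℝ (Fin n) → EuclideanSpace ℝ (Fin m))
    (hF : ContDiff ℝ 1 F)
    (φ : EuclideanSpace ℝ (Fin n) → EuclideanSpace ℝ (Fin n) → ℝ)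
    (hφ : ∀ y x, φ y x = h (F x + fderiv ℝ F x (y - x))) :
    ∀ (x : EuclideanSpace ℝ (Fin n)) (xk yk : ℕ → EuclideanSpace ℝ (Fin n)),
      Tendsto xk atTop (nhds x) → Tendsto yk atTop (nhds x) →
      ∃ ε : ℕ → ℝ, Tendsto ε atTop (nhds 0) ∧ (∀ k, 0 ≤ ε k) ∧
        ∀ k, h (F (yk k)) ≤ φ (yk k) (xk k) + ε k * ‖yk k - xk k‖ := by
  intro x xk yk hxk hyk
  have hrem := hF.contDiffAt.isLittleO_sub_fderiv.comp_tendsto (hyk.prodMk_nhds hxk)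
  obtain ⟨ε, hε0, hεnn, hεle⟩ := hrem.exists_tendsto_zero_norm_le fun k hk => by
    simp [sub_eq_zero.1 (show yk k - xk k = 0 from hk)]
  refine ⟨fun k => L * ε k, by simpa using hε0.const_mul (L : ℝ),
    fun k => mul_nonneg L.coe_nonneg (hεnn k), fun k => ?_⟩
  calc h (F (yk k))
      ≤ φ (yk k) (xk k) + L * dist (F (yk k)) (F (xk k) + fderiv ℝ F (xk k) (yk k - xk k)) := by
        rw [hφ]; exact hlip.le_add_mul _ _
    _ ≤ φ (yk k) (xk k) + L * (ε k * ‖yk k - xk k‖) := by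
        rw [dist_eq_norm, ← sub_sub]
        gcongr
        exact hεle k
    _ = φ (yk k) (xk k) + L * ε k * ‖yk k - xk k‖ := by ring

/-- The natural model `φ(y,x) = h(F(x) + F'(x)(y − x))` of the composite
function `f = h ∘ F`, with `h` convex and `L`-Lipschitz and `F` of class `C¹`,
is strict in the sense of axiom (M̃₂). -/
theorem natural_model_strict {n m : ℕ}
    (h : EuclideanSpace ℝ (Fin m) → ℝ) (L : NNReal)
    (hconv : ConvexOn ℝ Set.univ h) (hlip : LipschitzWith L h)
    (F : EuclideanSpace ℝ (Fin n) → EuclideanSpace ℝ (Fin m))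
    (hF : ContDiff ℝ 1 F)
    (φ : EuclideanSpace ℝ (Fin n) → EuclideanSpace ℝ (Fin n) → ℝ)
    (hφ : ∀ y x, φ y x = h (F x + fderiv ℝ F x (y - x))) :
    ∀ (x : EuclideanSpace ℝ (Fin n)) (xk yk : ℕ → EuclideanSpace ℝ (Fin n)),
      Tendsto xk atTop (nhds x) → Tendsto yk atTop (nhds x) →
      ∃ ε : ℕ → ℝ, Tendsto ε atTop (nhds 0) ∧ (∀ k, 0 ≤ ε k) ∧
        ∀ k, h (F (yk k)) ≤ φ (yk k) (xk k) + ε k * ‖yk k - xk k‖ :=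
  natural_model_strict_general h L hlip F hF φ hφ
end

section
/- With f and x = (x₁, −(2/3)x₁ + a/3), 0 < x₁ ≤ a/11, as in the Cauchy-point counterexample, and with the linear model m(y) = a + (2,3)·(y − x), the trust-region quotient ρ(r) = (f(x) − f(y(r)))/(f(x) − m(y(r))) along y(r) = x + r(−2,−3) satisfies: ρ(r) = 1 for 0 < r ≤ x₁/2, and ρ(r) = (4x₁ + 5r)/(13r) for x₁/2 ≤ r ≤ (7/27)x₁ + a/27; in particular ρ is nonincreasing on [x₁/2, (7/27)x₁ + a/27]. -/
private lemma max4A {c A B C D : ℝ} (h0 : c ≤ A) (hB : B ≤ A) (hC : C ≤ A) (hD : D ≤ A) :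
    max (max (max (max c A) B) C) D = A := by
  rw [max_eq_right h0, max_eq_left hB, max_eq_left hC, max_eq_left hD]

private lemma max4B {c A B C D : ℝ} (h0 : c ≤ A) (hAB : A ≤ B) (hC : C ≤ B) (hD : D ≤ B) :
    max (max (max (max c A) B) C) D = B := by
  rw [max_eq_right h0, max_eq_right hAB, max_eq_left hC, max_eq_left hD]

/-- Trust-region quotient along the steepest-descent ray in the Cauchy-point
counterexample: `ρ(r) = 1` on `(0, x₁/2]`, `ρ(r) = (4x₁+5r)/(13r)` on
`[x₁/2, r_B]`, and `ρ` is nonincreasing on `[x₁/2, r_B]`. -/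
theorem counterexample_quotient
    (f : ℝ × ℝ → ℝ)
    (hf : ∀ p, f p = max (max (max (max (-100) (2 * p.1 + 3 * p.2))
        (-2 * p.1 + 3 * p.2)) (5 * p.1 + 2 * p.2)) (-5 * p.1 + 2 * p.2))
    (a x₁ : ℝ) (ha : 0 < a) (hx₁ : 0 < x₁ ∧ x₁ ≤ a / 11)
    (x : ℝ × ℝ) (hx : x = (x₁, -(2 / 3) * x₁ + a / 3))
    (y : ℝ → ℝ × ℝ) (hy : ∀ r, y r = (x.1 - 2 * r, x.2 - 3 * r))
    (m : ℝ × ℝ → ℝ) (hm : ∀ p, m p = a + 2 * (p.1 - x.1) + 3 * (p.2 - x.2))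
    (ρ : ℝ → ℝ) (hρ : ∀ r, ρ r = (f x - f (y r)) / (f x - m (y r))) :
    (∀ r, 0 < r → r ≤ x₁ / 2 → ρ r = 1) ∧
    (∀ r, x₁ / 2 ≤ r → r ≤ (7 / 27) * x₁ + a / 27 →
      ρ r = (4 * x₁ + 5 * r) / (13 * r)) ∧
    AntitoneOn ρ (Set.Icc (x₁ / 2) ((7 / 27) * x₁ + a / 27)) := by
  obtain ⟨hx1, hx11⟩ := hx₁
  have hfx : f x = a := by
    rw [hf, hx]
    dsimp only
    rw [max4A (by linarith) (by linarith) (by linarith) (by linarith)]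
    ring
  have hmy : ∀ r, m (y r) = a - 13 * r := by
    intro r
    rw [hm, hy]
    dsimp only
    ring
  have key1 : ∀ r, 0 < r → r ≤ x₁ / 2 → ρ r = 1 := by
    intro r hr hr2
    have hfy : f (y r) = a - 13 * r := by
      rw [hf, hy, hx]
      dsimp only
      rw [max4A (by linarith) (by linarith) (by linarith) (by linarith)]
      ring
    rw [hρ, hfx, hfy, hmy]
    have : a - (a - 13 * r) = 13 * r := by ring
    rw [this]
    exact div_self (by positivity)
  have key2 : ∀ r, x₁ / 2 ≤ r → r ≤ (7 / 27) * x₁ + a / 27 →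
      ρ r = (4 * x₁ + 5 * r) / (13 * r) := by
    intro r hr hr2
    have hrpos : 0 < r := by linarith
    have hfy : f (y r) = a - 4 * x₁ - 5 * r := by
      rw [hf, hy, hx]
      dsimp only
      rw [max4B (by linarith) (by linarith) (by linarith) (by linarith)]
      ring
    rw [hρ, hfx, hfy, hmy]
    congr 1 <;> ring
  refine ⟨key1, key2, ?_⟩
  intro r hr s hs hrs
  have hrpos : 0 < r := by linarith [hr.1]
  have hspos : 0 < s := by linarith [hs.1]
  rw [key2 r hr.1 hr.2, key2 s hs.1 hs.2]
  rw [div_le_div_iff₀ (by positivity) (by positivity)]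
  nlinarith
end

section
/- In the Cauchy-point counterexample, evaluating the quotient ρ at r_B = (7/27)x₁ + a/27: as a function of x₁ ∈ [0, a/11], ρ(r_B) = (4x₁ + 5r_B)/(13 r_B) equals 5/13 at x₁ = 0 and 198/234 at x₁ = a/11, and is monotone increasing in x₁ on [0, a/11]. Consequently, for any acceptance threshold γ ∈ (198/234, 1), every trial step with r ≥ r_B is rejected (ρ(r) < γ) for all x₁ ∈ (0, a/11]. -/
/-- Behaviour of the trust-region quotient at `r_B = (7/27)x₁ + a/27` in the
Cauchy-point counterexample: as a function of `x₁` on `[0, a/11]` it is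
strictly increasing, from `5/13` at `x₁ = 0` to `198/234` at `x₁ = a/11`;
consequently for any acceptance threshold `γ ∈ (198/234, 1)` every trial step
with `r ≥ r_B` is rejected. -/
theorem counterexample_rejection_beyond_rB
    (f : ℝ × ℝ → ℝ)
    (hf : ∀ p, f p = max (max (max (max (-100) (2 * p.1 + 3 * p.2))
        (-2 * p.1 + 3 * p.2)) (5 * p.1 + 2 * p.2)) (-5 * p.1 + 2 * p.2))
    (a : ℝ) (ha : 0 < a)
    (rB : ℝ → ℝ) (hrB : ∀ x₁, rB x₁ = (7 / 27) * x₁ + a / 27)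
    (q : ℝ → ℝ) (hq : ∀ x₁, q x₁ = (4 * x₁ + 5 * rB x₁) / (13 * rB x₁)) :
    q 0 = 5 / 13 ∧ q (a / 11) = 198 / 234 ∧
    StrictMonoOn q (Set.Icc 0 (a / 11)) ∧
    ∀ γ : ℝ, 198 / 234 < γ → γ < 1 →
      ∀ x₁ : ℝ, 0 < x₁ → x₁ ≤ a / 11 →
        ∀ r : ℝ, rB x₁ ≤ r →
          (f (x₁, -(2 / 3) * x₁ + a / 3) - f (x₁ - 2 * r, -(2 / 3) * x₁ + a / 3 - 3 * r))
            / (f (x₁, -(2 / 3) * x₁ + a / 3) - (a - 13 * r)) < γ := by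
  have ha' : a ≠ 0 := ha.ne'
  refine ⟨?_, ?_, ?_, ?_⟩
  · rw [hq, hrB]; field_simp; ring
  · rw [hq, hrB]; field_simp; ring
  · intro s hs t ht hst
    rw [hq, hq, hrB, hrB]
    have hds : (0:ℝ) < 13 * ((7/27) * s + a/27) := by nlinarith [hs.1]
    have hdt : (0:ℝ) < 13 * ((7/27) * t + a/27) := by nlinarith [ht.1]
    rw [div_lt_div_iff₀ hds hdt]
    nlinarith [mul_pos ha (sub_pos.mpr hst)]
  · intro γ hγ1 hγ2 x₁ hx1 hx2 r hr
    have hrpos : 0 < r := by rw [hrB] at hr; nlinarith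
    have hfx : f (x₁, -(2 / 3) * x₁ + a / 3) = a := by
      rw [hf]
      apply le_antisymm
      · apply max_le (max_le (max_le (max_le (by linarith) (by norm_num; linarith))
          (by norm_num; linarith)) (by norm_num; linarith)) (by norm_num; linarith)
      · calc a = 2 * (x₁, -(2 / 3) * x₁ + a / 3).1 + 3 * (x₁, -(2 / 3) * x₁ + a / 3).2 := by
              norm_num; ring
          _ ≤ _ := le_max_of_le_left (le_max_of_le_left (le_max_of_le_left (le_max_right _ _)))
    have hf2 : a - 4 * x₁ - 5 * r ≤ f (x₁ - 2 * r, -(2 / 3) * x₁ + a / 3 - 3 * r) := by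
      rw [hf]
      calc a - 4 * x₁ - 5 * r
          = -2 * (x₁ - 2 * r, -(2 / 3) * x₁ + a / 3 - 3 * r).1
            + 3 * (x₁ - 2 * r, -(2 / 3) * x₁ + a / 3 - 3 * r).2 := by norm_num; ring
        _ ≤ _ := le_max_of_le_left (le_max_of_le_left (le_max_right _ _))
    rw [hfx]
    have hden : (0:ℝ) < a - (a - 13 * r) := by linarith
    rw [div_lt_iff₀ hden]
    have h4 : 4 * x₁ ≤ 6 * r := by rw [hrB] at hr; nlinarith
    nlinarith [mul_pos (show (0:ℝ) < γ - 198/234 by linarith) hrpos]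
end

section
/- Let g : ℝⁿ → ℝ be continuously differentiable and h : ℝⁿ → ℝ convex, and define f = g + h and φ(y,x) = g(x) + ∇g(x)ᵀ(y − x) + h(y). Then φ(·,x) is convex, φ(x,x) = f(x), ∂₁φ(x,x) = ∇g(x) + ∂h(x) = ∂f(x), and for all sequences x_k → x, y_k → x there exist ε_k → 0⁺ with f(y_k) ≤ φ(y_k, x_k) + ε_k‖y_k − x_k‖; i.e., φ is a strict first-order model of f. -/
/-!
The first three properties are bookkeeping: `φ(·, x)` differs from `h` by an affine function,
which preserves convexity and only translates subgradients. For the strictness axiom write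
`g y - g x' - ⟪∇g x', y - x'⟫` as the strict-derivative remainder of `g` at `x` plus
`⟪∇g x - ∇g x', y - x'⟫`; the first is `o(‖y - x'‖)` because a `C¹` map is strictly
differentiable, the second because `∇g` is continuous. Dividing the remainder by `‖y_k - x_k‖`
gives `ε_k`.
-/

open scoped RealInnerProductSpace Topology
open Filter Asymptotics

section Remainder

variable {𝕜 E F : Type*} [RCLike 𝕜] [NormedAddCommGroup E] [NormedSpace 𝕜 E]
  [NormedAddCommGroup F] [NormedSpace 𝕜 F]

theorem isLittleO_clm_apply_of_tendsto_zero {α : Type*} {l : Filter α} {A : α → E →L[𝕜] F}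
    {w : α → E} (hA : Tendsto A l (𝓝 0)) : (fun a => A a (w a)) =o[l] w := by
  refine isLittleO_iff.2 fun c hc => ?_
  filter_upwards [(tendsto_zero_iff_norm_tendsto_zero.1 hA).eventually (eventually_le_nhds hc)]
    with a ha
  exact (A a).le_of_opNorm_le ha (w a)

theorem ContDiffAt.isLittleO_sub_sub_fderiv_snd {f : E → F} {x : E} (hf : ContDiffAt 𝕜 1 f x) :
    (fun p : E × E => f p.1 - f p.2 - fderiv 𝕜 f p.2 (p.1 - p.2)) =o[𝓝 (x, x)]
      fun p => p.1 - p.2 := by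
  have hstrict := (hf.hasStrictFDerivAt one_ne_zero).isLittleO
  have hvar : Tendsto (fun p : E × E => fderiv 𝕜 f x - fderiv 𝕜 f p.2) (𝓝 (x, x)) (𝓝 0) := by
    have := ((hf.continuousAt_fderiv one_ne_zero).comp (x := (x, x)) continuousAt_snd).tendsto
      |>.const_sub (fderiv 𝕜 f x)
    simpa only [Function.comp_apply, sub_self] using this
  refine (hstrict.add (isLittleO_clm_apply_of_tendsto_zero hvar)).congr_left fun p => ?_
  simp only [sub_apply]
  abel

end Remainder

theorem Asymptotics.IsLittleO.exists_tendsto_zero_le_mul_norm {α E : Type*}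
    [NormedAddCommGroup E] {l : Filter α} {u : α → ℝ} {v : α → E} (h : u =o[l] v)
    (hz : ∀ a, v a = 0 → u a = 0) :
    ∃ ε : α → ℝ, Tendsto ε l (𝓝 0) ∧ (∀ a, 0 ≤ ε a) ∧ ∀ a, u a ≤ ε a * ‖v a‖ := by
  refine ⟨fun a => ‖u a‖ / ‖v a‖, ?_, fun a => by positivity, fun a => ?_⟩
  · refine (isLittleO_iff_tendsto fun a ha => ?_).1 h.norm_norm
    rw [hz a (norm_eq_zero.1 ha), norm_zero]
  · rcases eq_or_ne (v a) 0 with ha | ha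
    · simp [hz a ha]
    · rw [div_mul_cancel₀ _ (norm_ne_zero_iff.2 ha)]
      exact le_abs_self _

section Subdifferential

variable {E : Type*} [NormedAddCommGroup E] [InnerProductSpace ℝ E]

def subdifferential (h : E → ℝ) (x : E) : Set E :=
  {q | ∀ y, h x + ⟪q, y - x⟫ ≤ h y}

theorem ConvexOn.affine_add {h : E → ℝ} (hh : ConvexOn ℝ Set.univ h) (c : ℝ) (v x₀ : E) :
    ConvexOn ℝ Set.univ (fun y => c + ⟪v, y - x₀⟫ + h y) := by
  have haff : ConvexOn ℝ Set.univ (fun y => ⟪v, y⟫ + (c - ⟪v, x₀⟫)) :=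
    ((innerSL ℝ v).toLinearMap.convexOn convex_univ).add_const _
  have heq : (fun y => c + ⟪v, y - x₀⟫ + h y) = (fun y => ⟪v, y⟫ + (c - ⟪v, x₀⟫)) + h := by
    funext y
    simp only [Pi.add_apply, inner_sub_right]
    ring
  exact heq ▸ haff.add hh

theorem subdifferential_affine_add (h : E → ℝ) (c : ℝ) (v x₀ x : E) :
    subdifferential (fun y => c + ⟪v, y - x₀⟫ + h y) x
      = (fun q => v + q) '' subdifferential h x := by
  ext p
  simp only [subdifferential, Set.mem_ofPred_eq, Set.mem_image]
  constructor
  · intro hp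
    refine ⟨p - v, fun y => ?_, add_sub_cancel v p⟩
    have := hp y
    simp only [inner_sub_left, inner_sub_right] at this ⊢
    linarith
  · rintro ⟨q, hq, rfl⟩ y
    have := hq y
    simp only [inner_add_left, inner_sub_right] at this ⊢
    linarith

end Subdifferential

/-- The splitting model: for `f = g + h` with `g` of class `C¹` and `h`
convex, `φ(y,x) = g(x) + ⟪∇g(x), y − x⟫ + h(y)` is a strict first-order model
of `f`: `φ(·,x)` is convex, `φ(x,x) = f(x)`,
`∂₁φ(x,x) = ∇g(x) + ∂h(x)`, and axiom (M̃₂) holds. -/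
theorem splitting_model_strict {n : ℕ}
    (g h : EuclideanSpace ℝ (Fin n) → ℝ)
    (hg : ContDiff ℝ 1 g) (hh : ConvexOn ℝ Set.univ h)
    (φ : EuclideanSpace ℝ (Fin n) → EuclideanSpace ℝ (Fin n) → ℝ)
    (hφ : ∀ y x, φ y x = g x + ⟪gradient g x, y - x⟫ + h y) :
    (∀ x, ConvexOn ℝ Set.univ (fun y => φ y x)) ∧
    (∀ x, φ x x = g x + h x) ∧
    (∀ x, {p | ∀ y, φ x x + ⟪p, y - x⟫ ≤ φ y x}
        = (fun q => gradient g x + q) '' {q | ∀ y, h x + ⟪q, y - x⟫ ≤ h y}) ∧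
    (∀ (x : EuclideanSpace ℝ (Fin n)) (xk yk : ℕ → EuclideanSpace ℝ (Fin n)),
      Tendsto xk atTop (nhds x) → Tendsto yk atTop (nhds x) →
      ∃ ε : ℕ → ℝ, Tendsto ε atTop (nhds 0) ∧ (∀ k, 0 ≤ ε k) ∧
        ∀ k, g (yk k) + h (yk k) ≤ φ (yk k) (xk k) + ε k * ‖yk k - xk k‖) := by
  have hφx : ∀ x, (fun y => φ y x) = fun y => g x + ⟪gradient g x, y - x⟫ + h y :=
    fun x => funext fun y => hφ y x
  refine ⟨fun x => hφx x ▸ hh.affine_add _ _ _, fun x => by simp [hφ], fun x => ?_, ?_⟩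
  · change subdifferential (fun y => φ y x) x = _
    rw [hφx, subdifferential_affine_add]
    rfl
  · intro x xk yk hxk hyk
    have hrem := hg.contDiffAt.isLittleO_sub_sub_fderiv_snd.comp_tendsto (hyk.prodMk_nhds hxk)
    obtain ⟨ε, hε, hε_nonneg, hε_le⟩ :=
      hrem.exists_tendsto_zero_le_mul_norm fun k hk => by
        have hyx : yk k = xk k := sub_eq_zero.1 hk
        simp [hyx]
    refine ⟨ε, hε, hε_nonneg, fun k => ?_⟩
    have := hε_le k
    simp only [Function.comp_apply, ← toDual_gradient, InnerProductSpace.toDual_apply_apply]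
      at this
    rw [hφ]
    linarith
end

section
/- Let Ψ : ℝⁿ × K → ℝ with K a compact topological space, Ψ and ∂Ψ/∂x jointly continuous, and define f(x) = max_{y ∈ K} Ψ(x,y) (a lower-C¹ function). Then for every x₀ and every ε > 0 there is δ > 0 such that for all x₁, x₂ in the δ-ball around x₀ and all g₁ ∈ ∂f(x₁), g₂ ∈ ∂f(x₂): (g₁ − g₂)ᵀ(x₁ − x₂) ≥ −ε‖x₁ − x₂‖, i.e., ∂f is ε-submonotone near x₀. Equivalently, −f (upper-C¹) has a super-monotone Clarke subdifferential. -/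
open scoped RealInnerProductSpace

/-- Daniilidis–Georgiev submonotonicity for lower-C¹ functions: if
`f(x) = max_{y ∈ K} Ψ(x,y)` with `K` compact, `Ψ` and its partial gradient
`D` in `x` jointly continuous, and the Clarke subdifferential of `f` is
`∂f(x) = conv{D(x,y) : Ψ(x,y) = f(x)}`, then `∂f` is `ε`-submonotone near
every point. -/
theorem lowerC1_submonotone {n : ℕ} {K : Type*}
    [TopologicalSpace K] [CompactSpace K] [Nonempty K]
    (Ψ : EuclideanSpace ℝ (Fin n) × K → ℝ) (hΨ : Continuous Ψ)
    (D : EuclideanSpace ℝ (Fin n) × K → EuclideanSpace ℝ (Fin n))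
    (hD : Continuous D)
    (hgrad : ∀ (y : K) (x : EuclideanSpace ℝ (Fin n)),
      HasGradientAt (fun x' => Ψ (x', y)) (D (x, y)) x)
    (f : EuclideanSpace ℝ (Fin n) → ℝ)
    (hf : ∀ x, IsGreatest {r | ∃ y : K, Ψ (x, y) = r} (f x))
    (Df : EuclideanSpace ℝ (Fin n) → Set (EuclideanSpace ℝ (Fin n)))
    (hDf : ∀ x, Df x = convexHull ℝ {g | ∃ y : K, Ψ (x, y) = f x ∧ g = D (x, y)}) :
    ∀ (x₀ : EuclideanSpace ℝ (Fin n)) (ε : ℝ), 0 < ε →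
      ∃ δ > 0, ∀ x₁ x₂ : EuclideanSpace ℝ (Fin n),
        ‖x₁ - x₀‖ < δ → ‖x₂ - x₀‖ < δ →
        ∀ g₁ ∈ Df x₁, ∀ g₂ ∈ Df x₂,
          -ε * ‖x₁ - x₂‖ ≤ ⟪g₁ - g₂, x₁ - x₂⟫ := by
  intro x₀ ε hε
  -- Step 1: uniform bound on D near x₀
  have hC : IsClosed {q : K × (EuclideanSpace ℝ (Fin n) × EuclideanSpace ℝ (Fin n)) | ε / 2 ≤ ‖D (q.2.1, q.1) - D (q.2.2, q.1)‖} := by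
    apply isClosed_le continuous_const
    fun_prop
  have himg : IsClosed (Prod.snd ''
      {q : K × (EuclideanSpace ℝ (Fin n) × EuclideanSpace ℝ (Fin n)) | ε / 2 ≤ ‖D (q.2.1, q.1) - D (q.2.2, q.1)‖}) :=
    isClosedMap_snd_of_compactSpace _ hC
  have hmem : (x₀, x₀) ∈ (Prod.snd ''
      {q : K × (EuclideanSpace ℝ (Fin n) × EuclideanSpace ℝ (Fin n)) | ε / 2 ≤ ‖D (q.2.1, q.1) - D (q.2.2, q.1)‖})ᶜ := by
    rintro ⟨⟨y, p⟩, hq, rfl⟩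
    simp only [Set.mem_setOf_eq] at hq
    rw [sub_self, norm_zero] at hq
    linarith
  obtain ⟨δ, hδpos, hδ⟩ := Metric.isOpen_iff.1 himg.isOpen_compl _ hmem
  refine ⟨δ, hδpos, ?_⟩
  have hball : ∀ x x' : EuclideanSpace ℝ (Fin n), ‖x - x₀‖ < δ → ‖x' - x₀‖ < δ → ∀ y : K,
      ‖D (x, y) - D (x', y)‖ < ε / 2 := by
    intro x x' hx hx' y
    by_contra h
    push_neg at h
    have : ((x, x') : EuclideanSpace ℝ (Fin n) × EuclideanSpace ℝ (Fin n)) ∈ Metric.ball (x₀, x₀) δ := by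
      rw [Metric.mem_ball, Prod.dist_eq]
      simp only [dist_eq_norm]
      exact max_lt hx hx'
    exact hδ this ⟨(y, (x, x')), h, rfl⟩
  -- Step 2: key inequality for active gradients
  have key : ∀ x₁ x₂ : EuclideanSpace ℝ (Fin n), ‖x₁ - x₀‖ < δ → ‖x₂ - x₀‖ < δ → ∀ y : K, Ψ (x₁, y) = f x₁ →
      f x₁ - f x₂ - ε / 2 * ‖x₁ - x₂‖ ≤ ⟪D (x₁, y), x₁ - x₂⟫ := by
    intro x₁ x₂ hx₁ hx₂ y hy
    set c := D (x₁, y)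
    set φ : EuclideanSpace ℝ (Fin n) → ℝ := fun x => Ψ (x, y) - ⟪c, x⟫
    have hφ : ∀ x ∈ Metric.ball x₀ δ, HasFDerivWithinAt φ
        ((InnerProductSpace.toDual ℝ (EuclideanSpace ℝ (Fin n))) (D (x, y) - c)) (Metric.ball x₀ δ) x := by
      intro x _
      have h1 : HasFDerivAt (fun x' => Ψ (x', y)) ((InnerProductSpace.toDual ℝ (EuclideanSpace ℝ (Fin n))) (D (x, y))) x :=
        (hgrad y x).hasFDerivAt
      have h2 : HasFDerivAt (fun x' : EuclideanSpace ℝ (Fin n) => ⟪c, x'⟫) ((InnerProductSpace.toDual ℝ (EuclideanSpace ℝ (Fin n))) c) x :=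
        ((InnerProductSpace.toDual ℝ (EuclideanSpace ℝ (Fin n))) c).hasFDerivAt
      have := h1.sub h2
      rw [map_sub] at *
      exact this.hasFDerivWithinAt
    have hbound : ∀ x ∈ Metric.ball x₀ δ,
        ‖(InnerProductSpace.toDual ℝ (EuclideanSpace ℝ (Fin n))) (D (x, y) - c)‖ ≤ ε / 2 := by
      intro x hx
      rw [LinearIsometryEquiv.norm_map]
      exact le_of_lt (hball x x₁ (by rwa [← dist_eq_norm, ← Metric.mem_ball]) hx₁ y)
    have hx₁b : x₁ ∈ Metric.ball x₀ δ := by rwa [Metric.mem_ball, dist_eq_norm]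
    have hx₂b : x₂ ∈ Metric.ball x₀ δ := by rwa [Metric.mem_ball, dist_eq_norm]
    have hmvt := (convex_ball x₀ δ).norm_image_sub_le_of_norm_hasFDerivWithin_le
      hφ hbound hx₁b hx₂b
    have hφeq : φ x₂ - φ x₁ = Ψ (x₂, y) - Ψ (x₁, y) - ⟪c, x₂ - x₁⟫ := by
      simp only [φ, inner_sub_right]; ring
    have habs : |Ψ (x₂, y) - Ψ (x₁, y) - ⟪c, x₂ - x₁⟫| ≤ ε / 2 * ‖x₂ - x₁‖ := by
      rw [← hφeq, ← Real.norm_eq_abs]; exact hmvt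
    have hle : Ψ (x₂, y) ≤ f x₂ := (hf x₂).2 ⟨y, rfl⟩
    have hinner : ⟪c, x₂ - x₁⟫ = -⟪c, x₁ - x₂⟫ := by
      rw [← inner_neg_right]; congr 1; abel
    have hn : ‖x₂ - x₁‖ = ‖x₁ - x₂‖ := norm_sub_rev _ _
    rw [abs_le] at habs
    rw [hinner, hn] at habs
    linarith [habs.1, habs.2]
  -- Step 3: extend to convex hull
  have hull : ∀ x₁ x₂ : EuclideanSpace ℝ (Fin n), ‖x₁ - x₀‖ < δ → ‖x₂ - x₀‖ < δ → ∀ g ∈ Df x₁,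
      f x₁ - f x₂ - ε / 2 * ‖x₁ - x₂‖ ≤ ⟪g, x₁ - x₂⟫ := by
    intro x₁ x₂ hx₁ hx₂ g hg
    rw [hDf] at hg
    have hlin : IsLinearMap ℝ (fun w : EuclideanSpace ℝ (Fin n) => ⟪w, x₁ - x₂⟫) :=
      ⟨fun a b => inner_add_left _ _ _, fun r a => real_inner_smul_left _ _ _⟩
    have := convexHull_min (s := {g | ∃ y : K, Ψ (x₁, y) = f x₁ ∧ g = D (x₁, y)})
      (t := {w : EuclideanSpace ℝ (Fin n) | f x₁ - f x₂ - ε / 2 * ‖x₁ - x₂‖ ≤ ⟪w, x₁ - x₂⟫}) ?_ ?_ hg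
    · exact this
    · rintro w ⟨y, hy, rfl⟩
      exact key x₁ x₂ hx₁ hx₂ y hy
    · exact convex_halfSpace_ge hlin _
  intro x₁ x₂ hx₁ hx₂ g₁ hg₁ g₂ hg₂
  have h1 := hull x₁ x₂ hx₁ hx₂ g₁ hg₁
  have h2 := hull x₂ x₁ hx₂ hx₁ g₂ hg₂
  have hsplit : ⟪g₁ - g₂, x₁ - x₂⟫ = ⟪g₁, x₁ - x₂⟫ + ⟪g₂, x₂ - x₁⟫ := by
    rw [inner_sub_left]
    have : ⟪g₂, x₂ - x₁⟫ = -⟪g₂, x₁ - x₂⟫ := by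
      rw [← inner_neg_right]; congr 1; abel
    rw [this]; ring
  have hn : ‖x₂ - x₁‖ = ‖x₁ - x₂‖ := norm_sub_rev _ _
  rw [hn] at h2
  rw [hsplit]
  linarith
end
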